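/- There exists no orthogonal array OA(112, 11, 2, 4); that is, there is no 112×11 matrix with entries in {0,1} such that in every selection of 4 columns, each of the 16 binary 4-tuples occurs exactly 7 times as a row of the selected 112×4 submatrix. -/

import Mathlib

/-!
Delsarte's linear programming bound. For a set `T` of columns let
`s(T) = ∑ r, (-1) ^ (∑ i ∈ T, A r i)`. For every weight `w`,
`∑ T, w |T| * s(T) ^ 2 = ∑ r, ∑ r', K_w (d(r, r'))`, where `d` is the Hamming distance and `K_w`
a combination of Krawtchouk polynomials; so the left side is nonnegative whenever `K_w ≥ 0`.

On the other hand, expanding `(-1) ^ x = 1 - 2 x` writes `s(T)` through the numbers of rows that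
are all ones on subsets `S ⊆ T`, and strength `t` fixes these for `|S| ≤ t`. Hence `s(T) = 0` for
`1 ≤ |T| ≤ t`, and modulo `2 ^ (t + 1)` the value of `s(T)` is `λ 2 ^ t C(|T| - 1, t)` up to sign.
For `OA(112, 11, 2, 4)` this forces `s(T) ^ 2 ≥ 16 ^ 2` when `|T| ∈ {6, 7, 8}`, and for a suitable
weight, positive only on sizes `≤ 4`, the left side is at most
`55 * 112 ^ 2 - 16 ^ 2 * (5 * 462 + 8 * 330 + 9 * 165) < 0`.
-/

/-- `A` (a multiset of rows, indexed by a finite type `R`, of vectors in `{0,1}^n`) is a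
binary orthogonal array of strength `t` and index `lam`: for every selection of `t`
distinct columns, every binary `t`-tuple occurs exactly `lam` times among the rows
restricted to those columns. An `OA(N, n, 2, t)` is such an array with `N` rows and
index `lam = N / 2 ^ t`. -/
def IsOA {R : Type} [Fintype R] {n : ℕ} (t lam : ℕ) (A : R → Fin n → Fin 2) : Prop :=
  ∀ c : Fin t → Fin n, Function.Injective c → ∀ v : Fin t → Fin 2,
    (Finset.univ.filter fun r => ∀ i, A r (c i) = v i).card = lam

open Finset

theorem sum_powerset_filter_card_le_apply_card {α M : Type*} [AddCommMonoid M] (f : ℕ → M)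
    (T : Finset α) (t : ℕ) :
    ∑ S ∈ T.powerset with #S ≤ t, f #S = ∑ j ∈ range (t + 1), (#T).choose j • f j := by
  classical
  rw [← sum_fiberwise_of_maps_to (g := card) (t := range (t + 1))
    fun S hS => mem_range_succ_iff.2 (mem_filter.1 hS).2]
  refine sum_congr rfl fun j hj => ?_
  rw [← card_powersetCard, ← sum_const, powersetCard_eq_filter, filter_filter]
  refine sum_congr ?_ fun S hS => by rw [(mem_filter.1 hS).2]
  ext S
  simp only [mem_filter, mem_range] at hj ⊢
  constructor <;> rintro ⟨h1, h2⟩ <;> [exact ⟨h1, h2.2⟩; exact ⟨h1, by omega, h2⟩]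

theorem sum_apply_card_inter_card_sdiff {α M : Type*} [Fintype α] [DecidableEq α]
    [AddCommMonoid M] (D : Finset α) (f : ℕ → ℕ → M) :
    ∑ T : Finset α, f #(T ∩ D) #(T \ D) =
      ∑ u ∈ range (#D + 1), ∑ v ∈ range (#Dᶜ + 1), ((#D).choose u * (#Dᶜ).choose v) • f u v := by
  have hsplit : ∑ T : Finset α, f #(T ∩ D) #(T \ D) =
      ∑ U ∈ D.powerset, ∑ V ∈ Dᶜ.powerset, f #U #V := by
    rw [← sum_product']
    refine sum_nbij' (fun T => (T ∩ D, T \ D)) (fun p => p.1 ∪ p.2) (fun T _ => ?_)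
      (fun _ _ => mem_univ _) (fun T _ => by rw [union_comm, sdiff_union_inter])
      (fun p hp => ?_) (fun _ _ => rfl)
    · simp [subset_iff]
    · simp only [mem_product, mem_powerset, subset_iff, mem_compl] at hp
      ext i <;> grind
  rw [hsplit, sum_congr rfl fun U _ => sum_powerset_apply_card (f #U),
    sum_powerset_apply_card fun u => ∑ v ∈ range (#Dᶜ + 1), (#Dᶜ).choose v • f u v]
  simp_rw [smul_sum, mul_smul]

theorem sq_le_sq_of_modEq_mul_odd {x a m : ℤ} (hm : Odd m) (h : x ≡ a * m [ZMOD 2 * a]) :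
    a ^ 2 ≤ x ^ 2 := by
  obtain ⟨q, hq⟩ := Int.modEq_iff_dvd.1 h.symm
  obtain ⟨k, rfl⟩ := hm
  have hx : x = a * (2 * (k + q) + 1) := by linear_combination hq
  rw [hx, mul_pow]
  exact le_mul_of_one_le_right (sq_nonneg a)
    ((one_le_sq_iff_one_le_abs _).2 (Int.one_le_abs (by omega)))

section Walsh

variable {R : Type*} [Fintype R] {n : ℕ}

def walshChar (x : Fin n → Fin 2) (T : Finset (Fin n)) : ℤ :=
  ∏ i ∈ T, (-1) ^ (x i : ℕ)

def walshSum (A : R → Fin n → Fin 2) (T : Finset (Fin n)) : ℤ :=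
  ∑ r, walshChar (A r) T

theorem neg_one_pow_fin_two (x : Fin 2) :
    (-1 : ℤ) ^ (x : ℕ) = 1 + -2 * if x = 1 then 1 else 0 := by
  fin_cases x <;> rfl

theorem walshSum_eq_sum_powerset (A : R → Fin n → Fin 2) (T : Finset (Fin n)) :
    walshSum A T = ∑ S ∈ T.powerset, (-2 : ℤ) ^ #S * #{r | ∀ i ∈ S, A r i = 1} := by
  simp_rw [walshSum, walshChar, neg_one_pow_fin_two, prod_one_add, prod_mul_distrib, prod_const,
    prod_boole]
  rw [sum_comm]
  exact sum_congr rfl fun S _ => by simp [sum_ite, mul_comm]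

theorem walshChar_mul_walshChar (x y : Fin n → Fin 2) (T : Finset (Fin n)) :
    walshChar x T * walshChar y T = (-1) ^ #{i ∈ T | x i ≠ y i} := by
  have h (a b : Fin 2) : (-1 : ℤ) ^ (a : ℕ) * (-1) ^ (b : ℕ) = if a ≠ b then -1 else 1 := by
    decide +revert
  simp_rw [walshChar, ← prod_mul_distrib, h]
  rw [prod_ite, prod_const, prod_const_one, mul_one]

/-- `∑ k, w k * K_k d`, where `K_k` is the binary Krawtchouk polynomial of length `n`. -/
def krawtchoukSum (w : ℕ → ℤ) (n d : ℕ) : ℤ :=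
  ∑ u ∈ range (d + 1), ∑ v ∈ range (n - d + 1),
    (-1) ^ u * d.choose u * (n - d).choose v * w (u + v)

theorem sum_weight_mul_walshChar_mul_walshChar (w : ℕ → ℤ) (x y : Fin n → Fin 2) :
    ∑ T, w #T * (walshChar x T * walshChar y T) = krawtchoukSum w n (hammingDist x y) := by
  set D : Finset (Fin n) := {i | x i ≠ y i}
  have hD : #D = hammingDist x y := rfl
  have hDc : #Dᶜ = n - hammingDist x y := by rw [card_compl, Fintype.card_fin, hD]
  calc ∑ T, w #T * (walshChar x T * walshChar y T)
      = ∑ T, w (#(T ∩ D) + #(T \ D)) * (-1) ^ #(T ∩ D) :=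
        sum_congr rfl fun T _ => by
          rw [walshChar_mul_walshChar, card_inter_add_card_sdiff, inter_filter, inter_univ]
    _ = krawtchoukSum w n (hammingDist x y) := by
        rw [sum_apply_card_inter_card_sdiff D fun u v => w (u + v) * (-1) ^ u, hD, hDc,
          krawtchoukSum]
        refine sum_congr rfl fun u _ => sum_congr rfl fun v _ => ?_
        ring

theorem sum_weight_mul_walshSum_sq (w : ℕ → ℤ) (A : R → Fin n → Fin 2) :
    ∑ T, w #T * walshSum A T ^ 2 = ∑ r, ∑ r', krawtchoukSum w n (hammingDist (A r) (A r')) := by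
  simp_rw [← sum_weight_mul_walshChar_mul_walshChar, walshSum, sq, sum_mul_sum, mul_sum]
  rw [sum_comm]
  exact sum_congr rfl fun _ _ => sum_comm

theorem sum_weight_mul_walshSum_sq_nonneg {w : ℕ → ℤ} (hw : ∀ d ≤ n, 0 ≤ krawtchoukSum w n d)
    (A : R → Fin n → Fin 2) : 0 ≤ ∑ T, w #T * walshSum A T ^ 2 := by
  rw [sum_weight_mul_walshSum_sq]
  exact sum_nonneg fun r _ => sum_nonneg fun r' _ =>
    hw _ (hammingDist_le_card_fintype.trans (Fintype.card_fin n).le)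

end Walsh

namespace IsOA

variable {R : Type} [Fintype R] {n t lam : ℕ} {A : R → Fin n → Fin 2}

theorem card_filter_eq_of_card_eq (hA : IsOA t lam A) {S : Finset (Fin n)} (hS : #S = t)
    (p : Fin n → Fin 2) : #{r | ∀ i ∈ S, A r i = p i} = lam := by
  subst hS
  let c := S.orderEmbOfFin rfl
  convert hA c c.injective (p ∘ c) using 4 with r
  simp only [Function.comp_apply]
  rw [← Set.forall_mem_range (f := c) (p := fun i => A r i = p i), S.range_orderEmbOfFin rfl]
  rfl

theorem card_filter_eq (hA : IsOA t lam A) (htn : t ≤ n) {S : Finset (Fin n)} (hS : #S ≤ t)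
    (p : Fin n → Fin 2) : #{r | ∀ i ∈ S, A r i = p i} = lam * 2 ^ (t - #S) := by
  obtain ⟨k, hk⟩ := Nat.exists_eq_add_of_le hS
  rw [hk, Nat.add_sub_cancel_left]
  induction k generalizing S p with
  | zero => simpa using hA.card_filter_eq_of_card_eq hk.symm p
  | succ k ih =>
    obtain ⟨j, hj⟩ : ∃ j, j ∉ S := by
      by_contra! h
      have := card_le_card (show univ ⊆ S from fun i _ => h i)
      simp only [card_univ, Fintype.card_fin] at this
      omega
    have hS' : #(insert j S) = #S + 1 := card_insert_of_notMem hj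
    have hfiber (b : Fin 2) : #{r ∈ {r | ∀ i ∈ S, A r i = p i} | A r j = b}
        = #{r | ∀ i ∈ insert j S, A r i = Function.update p j b i} := by
      congr 1
      ext r
      simp only [mem_filter, mem_univ, true_and, forall_mem_insert, Function.update_self]
      grind [Function.update_of_ne]
    rw [card_eq_sum_card_fiberwise (f := fun r => A r j) (t := univ) fun _ _ => mem_univ _,
      sum_congr rfl fun b _ => (hfiber b).trans (ih (by omega) _ (by omega)), sum_const,
      card_univ, Fintype.card_fin, smul_eq_mul]
    ring

theorem walshSum_eq (hA : IsOA t lam A) (htn : t ≤ n) (T : Finset (Fin n)) :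
    walshSum A T = ∑ S ∈ T.powerset,
      if #S ≤ t then (lam : ℤ) * 2 ^ t * (-1) ^ #S
      else (-2) ^ #S * #{r | ∀ i ∈ S, A r i = 1} := by
  rw [walshSum_eq_sum_powerset]
  refine sum_congr rfl fun S _ => ?_
  split_ifs with hS
  · rw [hA.card_filter_eq htn hS, neg_pow, Nat.cast_mul, Nat.cast_pow,
      show (2 : ℤ) ^ t = 2 ^ #S * 2 ^ (t - #S) by rw [← pow_add, Nat.add_sub_cancel' hS]]
    push_cast
    ring
  · rfl

theorem walshSum_of_card_le (hA : IsOA t lam A) (htn : t ≤ n) {T : Finset (Fin n)}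
    (hT : #T ≤ t) : walshSum A T = if T = ∅ then lam * 2 ^ t else 0 := by
  rw [hA.walshSum_eq htn,
    sum_congr rfl fun S hS => if_pos ((card_le_card (mem_powerset.1 hS)).trans hT),
    ← mul_sum, sum_powerset_neg_one_pow_card]
  split_ifs <;> simp

theorem walshSum_modEq (hA : IsOA t lam A) (htn : t ≤ n) (T : Finset (Fin n)) :
    walshSum A T ≡ lam * 2 ^ t * ∑ j ∈ range (t + 1), (-1) ^ j * ((#T).choose j : ℤ)
      [ZMOD 2 ^ (t + 1)] := by
  refine (Int.modEq_iff_dvd.2 ?_).symm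
  simp_rw [mul_comm _ ((#T).choose _ : ℤ), ← nsmul_eq_mul,
    ← sum_powerset_filter_card_le_apply_card (fun j => (-1 : ℤ) ^ j)]
  rw [hA.walshSum_eq htn, mul_sum, sum_filter, ← sum_sub_distrib]
  refine dvd_sum fun S _ => ?_
  split_ifs with hS
  · simp
  · rw [sub_zero]
    exact ((pow_dvd_pow_of_dvd (by norm_num : (2 : ℤ) ∣ -2) _).trans
      (pow_dvd_pow _ (by omega))).mul_right _

theorem sq_le_walshSum_sq (hA : IsOA t lam A) (htn : t ≤ n) (hlam : Odd lam)
    {T : Finset (Fin n)} {m : ℕ} (hT : #T = m + 1) (hm : Odd (m.choose t)) :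
    (2 ^ t) ^ 2 ≤ walshSum A T ^ 2 := by
  have h := hA.walshSum_modEq htn T
  rw [hT, Int.alternating_sum_range_choose_eq_choose, pow_succ', mul_comm (lam : ℤ),
    mul_assoc] at h
  exact sq_le_sq_of_modEq_mul_odd
    ((Int.odd_coe_nat _).2 hlam |>.mul (odd_neg_one.pow.mul ((Int.odd_coe_nat _).2 hm))) h

end IsOA

/-- The certificate of Delsarte's linear programming bound for `OA(112, 11, 2, 4)`. -/
def lpWeight : ℕ → ℤ
  | 0 => 55
  | 1 => 40
  | 2 => 27
  | 3 => 16
  | 4 => 7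
  | 6 => -5
  | 7 => -8
  | 8 => -9
  | 9 => -8
  | 10 => -5
  | _ => 0

theorem krawtchoukSum_lpWeight_nonneg : ∀ d ≤ 11, 0 ≤ krawtchoukSum lpWeight 11 d := by
  decide

def walshSqBound (k : ℕ) : ℤ :=
  if k = 0 then 112 ^ 2 else if 4 < k ∧ Odd ((k - 1).choose 4) then 16 ^ 2 else 0

namespace IsOA

variable {R : Type} [Fintype R] {A : R → Fin 11 → Fin 2}

theorem lpWeight_mul_walshSum_sq_le (hA : IsOA 4 7 A) (T : Finset (Fin 11)) :
    lpWeight #T * walshSum A T ^ 2 ≤ lpWeight #T * walshSqBound #T := by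
  rcases le_or_gt #T 4 with hT | hT
  · rw [hA.walshSum_of_card_le (by norm_num) hT]
    by_cases h : T = ∅
    · simp [h, walshSqBound]
    · simp [h, walshSqBound, hT.not_gt]
  · have hw : ∀ k ≤ 11, 4 < k → lpWeight k ≤ 0 := by decide
    refine mul_le_mul_of_nonpos_left ?_
      (hw _ (card_le_univ T |>.trans_eq (Fintype.card_fin _)) hT)
    rw [walshSqBound, if_neg (by omega)]
    split_ifs with hodd
    · exact hA.sq_le_walshSum_sq (by norm_num) (by decide) (by omega) hodd.2
    · exact sq_nonneg _

theorem sum_lpWeight_mul_walshSum_sq_neg (hA : IsOA 4 7 A) :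
    ∑ T, lpWeight #T * walshSum A T ^ 2 < 0 :=
  calc ∑ T, lpWeight #T * walshSum A T ^ 2
      ≤ ∑ T : Finset (Fin 11), lpWeight #T * walshSqBound #T :=
        sum_le_sum fun T _ => hA.lpWeight_mul_walshSum_sq_le T
    _ = ∑ k ∈ range 12, (11).choose k • (lpWeight k * walshSqBound k) := by
        rw [← powerset_univ, sum_powerset_apply_card (fun k => lpWeight k * walshSqBound k)]
        simp
    _ < 0 := by decide

end IsOA

theorem no_OA_112_11 : ¬ ∃ A : Fin 112 → Fin 11 → Fin 2, IsOA 4 7 A := by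
  rintro ⟨A, hA⟩
  exact (sum_weight_mul_walshSum_sq_nonneg krawtchoukSum_lpWeight_nonneg A).not_gt
    hA.sum_lpWeight_mul_walshSum_sq_neg
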